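/- arXiv:0809.3875 — 4 statements merged into one kernel-verified Lean document; each statement's English description precedes it below -/
import Mathlib

section
/- Let 0 < a ≤ b and let n ≥ 2 be an integer. Then the number of pairs (p,q) of positive integers satisfying p²/a² + q²/b² < 1/a² + n²/b² is equal to n − 1 if and only if a²/b² ≤ 3/(n² − 1). (Equivalently: λ_{1,n} = π²(1/a² + n²/b²) is the n-th eigenvalue of the Dirichlet Laplacian on the rectangle, i.e. exactly n − 1 eigenvalues lie strictly below it, precisely when a²/b² ≤ 3/(n² − 1).) -/
/-!
The pairs lying strictly below `λ_{1,n}` form a lower set of `ℕ+ × ℕ+` that always contains the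
`n - 1` pairs `(1, q)` with `q < n`. Hence there are exactly `n - 1` of them iff `(2, 1)` is not
among them, i.e. iff `4/a² + 1/b² ≥ 1/a² + n²/b²`, which rearranges to `a²/b² ≤ 3/(n² - 1)`.
-/

def modesBelow (a b E : ℝ) : Set (ℕ+ × ℕ+) :=
  {pq | (pq.1 : ℝ) ^ 2 / a ^ 2 + (pq.2 : ℝ) ^ 2 / b ^ 2 < E}

theorem isLowerSet_modesBelow (a b E : ℝ) : IsLowerSet (modesBelow a b E) := by
  rintro ⟨p, q⟩ ⟨p', q'⟩ ⟨hp, hq⟩ h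
  simp only [modesBelow, Set.mem_ofPred_eq] at h ⊢
  have hp : (p' : ℝ) ≤ p := by exact_mod_cast hp
  have hq : (q' : ℝ) ≤ q := by exact_mod_cast hq
  calc (p' : ℝ) ^ 2 / a ^ 2 + (q' : ℝ) ^ 2 / b ^ 2
      ≤ (p : ℝ) ^ 2 / a ^ 2 + (q : ℝ) ^ 2 / b ^ 2 := by gcongr
    _ < E := h

theorem ncard_singleton_one_prod (n : ℕ) :
    ({1} ×ˢ {q : ℕ+ | (q : ℕ) < n} : Set (ℕ+ × ℕ+)).ncard = n - 1 := by
  have image_coe : ((↑) : ℕ+ → ℕ) '' {q : ℕ+ | (q : ℕ) < n} = Set.Ico 1 n := by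
    ext k
    constructor
    · rintro ⟨q, hq, rfl⟩; exact ⟨q.pos, hq⟩
    · rintro ⟨hk, hkn⟩; exact ⟨⟨k, hk⟩, hkn, rfl⟩
  rw [Set.ncard_prod, Set.ncard_singleton, one_mul,
    ← Set.ncard_image_of_injective _ PNat.coe_injective, image_coe, Set.ncard_Ico_nat]

section
variable {a b : ℝ} {n : ℕ}

theorem mk_one_mem_modesBelow_iff (hb : b ≠ 0) {q : ℕ+} :
    (1, q) ∈ modesBelow a b (1 / a ^ 2 + (n : ℝ) ^ 2 / b ^ 2) ↔ (q : ℕ) < n := by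
  simp only [modesBelow, Set.mem_ofPred_eq, PNat.val_ofNat, Nat.cast_one, one_pow,
    add_lt_add_iff_left]
  rw [div_lt_div_iff_of_pos_right (by positivity), sq_lt_sq₀ (by positivity) (by positivity)]
  exact_mod_cast Iff.rfl

theorem two_one_mem_modesBelow_iff :
    (2, 1) ∈ modesBelow a b (1 / a ^ 2 + (n : ℝ) ^ 2 / b ^ 2) ↔
      3 / a ^ 2 < ((n : ℝ) ^ 2 - 1) / b ^ 2 := by
  have gap : 1 / a ^ 2 + (n : ℝ) ^ 2 / b ^ 2 - (2 ^ 2 / a ^ 2 + 1 ^ 2 / b ^ 2) =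
      ((n : ℝ) ^ 2 - 1) / b ^ 2 - 3 / a ^ 2 := by ring
  simp only [modesBelow, Set.mem_ofPred_eq, PNat.val_ofNat, Nat.cast_ofNat, Nat.cast_one]
  rw [← sub_pos, gap, sub_pos]

theorem singleton_one_prod_subset_modesBelow (hb : b ≠ 0) :
    {1} ×ˢ {q : ℕ+ | (q : ℕ) < n} ⊆ modesBelow a b (1 / a ^ 2 + (n : ℝ) ^ 2 / b ^ 2) := by
  rintro ⟨p, q⟩ ⟨rfl, hq⟩
  exact (mk_one_mem_modesBelow_iff hb).2 hq

theorem modesBelow_eq_singleton_one_prod (hb : b ≠ 0)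
    (h : (2, 1) ∉ modesBelow a b (1 / a ^ 2 + (n : ℝ) ^ 2 / b ^ 2)) :
    modesBelow a b (1 / a ^ 2 + (n : ℝ) ^ 2 / b ^ 2) = {1} ×ˢ {q : ℕ+ | (q : ℕ) < n} := by
  refine Set.Subset.antisymm (fun ⟨p, q⟩ hpq => ?_) (singleton_one_prod_subset_modesBelow hb)
  obtain rfl : p = 1 := by
    by_contra hp
    have two_le_p : (2 : ℕ+) ≤ p := (PNat.coe_le_coe 2 p).mp (one_lt_iff_ne_one.2 hp)
    exact h (isLowerSet_modesBelow _ _ _ ⟨two_le_p, one_le⟩ hpq)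
  exact ⟨rfl, (mk_one_mem_modesBelow_iff hb).1 hpq⟩

theorem ncard_modesBelow_eq_iff (hb : b ≠ 0) (hn : 2 ≤ n) :
    (modesBelow a b (1 / a ^ 2 + (n : ℝ) ^ 2 / b ^ 2)).ncard = n - 1 ↔
      (2, 1) ∉ modesBelow a b (1 / a ^ 2 + (n : ℝ) ^ 2 / b ^ 2) := by
  refine ⟨fun hcard h21 => ?_, fun h21 => ?_⟩
  · -- `ncard` of an infinite set is `0`, so `n - 1 ≠ 0` forces finiteness.
    have hfin := Set.finite_of_ncard_ne_zero (s := modesBelow a b _) (by rw [hcard]; omega)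
    have hsub := Set.insert_subset h21 (singleton_one_prod_subset_modesBelow hb)
    have hle := Set.ncard_le_ncard hsub hfin
    rw [Set.ncard_insert_of_notMem (by simp) ((hfin.subset hsub).subset (Set.subset_insert _ _)),
      ncard_singleton_one_prod] at hle
    omega
  · rw [modesBelow_eq_singleton_one_prod hb h21, ncard_singleton_one_prod]

end

/-- For `0 < a ≤ b` and an integer `n ≥ 2`, the number of pairs `(p,q)`
of positive integers with `p²/a² + q²/b² < 1/a² + n²/b²` equals `n - 1` if and only if
`a²/b² ≤ 3/(n² - 1)`; i.e. `λ_{1,n} = π²(1/a² + n²/b²)` is the `n`-th Dirichlet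
eigenvalue of the rectangle (exactly `n - 1` eigenvalues lie strictly below it)
precisely when `a²/b² ≤ 3/(n² - 1)`. -/
theorem lambda_one_n_is_nth_eigenvalue_iff (a b : ℝ) (ha : 0 < a) (hab : a ≤ b)
    (n : ℕ) (hn : 2 ≤ n) :
    {pq : ℕ+ × ℕ+ |
        (pq.1 : ℝ) ^ 2 / a ^ 2 + (pq.2 : ℝ) ^ 2 / b ^ 2
          < 1 / a ^ 2 + (n : ℝ) ^ 2 / b ^ 2}.ncard = n - 1
      ↔ a ^ 2 / b ^ 2 ≤ 3 / ((n : ℝ) ^ 2 - 1) := by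
  have hb : 0 < b := ha.trans_le hab
  have hn2 : (0 : ℝ) < (n : ℝ) ^ 2 - 1 := by
    have : (2 : ℝ) ≤ n := by exact_mod_cast hn
    nlinarith
  rw [← modesBelow, ncard_modesBelow_eq_iff hb.ne' hn, two_one_mem_modesBelow_iff, not_lt,
    div_le_div_iff₀ (by positivity) hn2, div_le_div_iff₀ (by positivity) (by positivity), mul_comm]
end

section
/- Let 0 < a ≤ b with a²/b² = 3/8. Then 1/a² + 9/b² = 4/a² + 1/b²; exactly two pairs of positive integers, namely (1,1) and (1,2), satisfy p²/a² + q²/b² < 1/a² + 9/b²; exactly two pairs, namely (1,3) and (2,1), satisfy p²/a² + q²/b² = 1/a² + 9/b²; and every other pair (p,q) of positive integers satisfies p²/a² + q²/b² > 1/a² + 9/b². (Thus at the critical ratio a²/b² = 3/8 the third Dirichlet eigenvalue of the rectangle is a double eigenvalue, λ₃ = λ₄ = π²(1/a² + 9/b²).) -/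
/-!
At the ratio `a² / b² = 3 / 8` we have `p² / a² + q² / b² = (8 p² + 3 q²) / (8 a²)`, so every
comparison between these numbers is a comparison between values of the integer quadratic form
`8 p² + 3 q²`. The threshold `1 / a² + 9 / b²` corresponds to `8 + 27 = 35 = 32 + 3`, and
`8 p² + 3 q² ≤ 35` forces `p ≤ 2` and `q ≤ 3`, leaving finitely many pairs to inspect.
-/

section CriticalRatio

variable {a b : ℝ}

lemma ne_zero_and_ne_zero_of_sq_div_sq_eq (h : a ^ 2 / b ^ 2 = 3 / 8) : a ≠ 0 ∧ b ≠ 0 := by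
  have : a ^ 2 ≠ 0 ∧ b ^ 2 ≠ 0 := div_ne_zero_iff.mp (by rw [h]; norm_num)
  simpa using this

lemma div_sq_add_div_sq_of_sq_div_sq_eq (h : a ^ 2 / b ^ 2 = 3 / 8) (x y : ℝ) :
    x ^ 2 / a ^ 2 + y ^ 2 / b ^ 2 = (8 * x ^ 2 + 3 * y ^ 2) / (8 * a ^ 2) := by
  obtain ⟨ha, hb⟩ := ne_zero_and_ne_zero_of_sq_div_sq_eq h
  have hb2 : b ^ 2 = 8 / 3 * a ^ 2 := by field_simp at h; linarith
  rw [hb2]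
  field_simp

lemma div_sq_add_div_sq_lt_iff (h : a ^ 2 / b ^ 2 = 3 / 8) (x y x' y' : ℝ) :
    x ^ 2 / a ^ 2 + y ^ 2 / b ^ 2 < x' ^ 2 / a ^ 2 + y' ^ 2 / b ^ 2 ↔
      8 * x ^ 2 + 3 * y ^ 2 < 8 * x' ^ 2 + 3 * y' ^ 2 := by
  have ha := (ne_zero_and_ne_zero_of_sq_div_sq_eq h).1
  simp only [div_sq_add_div_sq_of_sq_div_sq_eq h]
  exact div_lt_div_iff_of_pos_right (by positivity)

lemma div_sq_add_div_sq_inj (h : a ^ 2 / b ^ 2 = 3 / 8) (x y x' y' : ℝ) :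
    x ^ 2 / a ^ 2 + y ^ 2 / b ^ 2 = x' ^ 2 / a ^ 2 + y' ^ 2 / b ^ 2 ↔
      8 * x ^ 2 + 3 * y ^ 2 = 8 * x' ^ 2 + 3 * y' ^ 2 := by
  have ha := (ne_zero_and_ne_zero_of_sq_div_sq_eq h).1
  simp only [div_sq_add_div_sq_of_sq_div_sq_eq h]
  exact div_left_inj' (by positivity)

end CriticalRatio

lemma eight_mul_sq_add_three_mul_sq_lt_35_iff (pq : ℕ+ × ℕ+) :
    8 * (pq.1 : ℕ) ^ 2 + 3 * (pq.2 : ℕ) ^ 2 < 35 ↔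
      pq ∈ ({(1, 1), (1, 2)} : Set (ℕ+ × ℕ+)) := by
  simp only [Set.mem_insert_iff, Set.mem_singleton_iff, Prod.ext_iff, ← PNat.coe_inj,
    PNat.val_ofNat]
  obtain ⟨⟨p, hp⟩, ⟨q, hq⟩⟩ := pq
  simp only [PNat.mk_coe]
  constructor
  · intro h
    have : p ≤ 2 := by nlinarith
    have : q ≤ 3 := by nlinarith
    interval_cases p <;> interval_cases q <;> omega
  · rintro (⟨rfl, rfl⟩ | ⟨rfl, rfl⟩) <;> norm_num

lemma eight_mul_sq_add_three_mul_sq_eq_35_iff (pq : ℕ+ × ℕ+) :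
    8 * (pq.1 : ℕ) ^ 2 + 3 * (pq.2 : ℕ) ^ 2 = 35 ↔
      pq ∈ ({(1, 3), (2, 1)} : Set (ℕ+ × ℕ+)) := by
  simp only [Set.mem_insert_iff, Set.mem_singleton_iff, Prod.ext_iff, ← PNat.coe_inj,
    PNat.val_ofNat]
  obtain ⟨⟨p, hp⟩, ⟨q, hq⟩⟩ := pq
  simp only [PNat.mk_coe]
  constructor
  · intro h
    have : p ≤ 2 := by nlinarith
    have : q ≤ 3 := by nlinarith
    interval_cases p <;> interval_cases q <;> omega
  · rintro (⟨rfl, rfl⟩ | ⟨rfl, rfl⟩) <;> norm_num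

lemma lt_eight_mul_sq_add_three_mul_sq_of_notMem {pq : ℕ+ × ℕ+}
    (h : pq ∉ ({(1, 1), (1, 2), (1, 3), (2, 1)} : Set (ℕ+ × ℕ+))) :
    35 < 8 * (pq.1 : ℕ) ^ 2 + 3 * (pq.2 : ℕ) ^ 2 := by
  refine lt_of_not_ge fun hle => h ?_
  rcases hle.lt_or_eq with hlt | heq
  · rw [eight_mul_sq_add_three_mul_sq_lt_35_iff] at hlt
    simp only [Set.mem_insert_iff, Set.mem_singleton_iff] at hlt ⊢
    tauto
  · rw [eight_mul_sq_add_three_mul_sq_eq_35_iff] at heq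
    simp only [Set.mem_insert_iff, Set.mem_singleton_iff] at heq ⊢
    tauto

theorem critical_ratio_double_eigenvalue_general (a b : ℝ)
    (hratio : a ^ 2 / b ^ 2 = 3 / 8) :
    (1 / a ^ 2 + 9 / b ^ 2 = 4 / a ^ 2 + 1 / b ^ 2)
    ∧ {pq : ℕ+ × ℕ+ |
          (pq.1 : ℝ) ^ 2 / a ^ 2 + (pq.2 : ℝ) ^ 2 / b ^ 2 < 1 / a ^ 2 + 9 / b ^ 2}
        = {((1 : ℕ+), (1 : ℕ+)), ((1 : ℕ+), (2 : ℕ+))}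
    ∧ {pq : ℕ+ × ℕ+ |
          (pq.1 : ℝ) ^ 2 / a ^ 2 + (pq.2 : ℝ) ^ 2 / b ^ 2 = 1 / a ^ 2 + 9 / b ^ 2}
        = {((1 : ℕ+), (3 : ℕ+)), ((2 : ℕ+), (1 : ℕ+))}
    ∧ ∀ pq : ℕ+ × ℕ+,
        pq ∉ ({((1 : ℕ+), (1 : ℕ+)), ((1 : ℕ+), (2 : ℕ+)), ((1 : ℕ+), (3 : ℕ+)),
                ((2 : ℕ+), (1 : ℕ+))} : Set (ℕ+ × ℕ+)) →
        (pq.1 : ℝ) ^ 2 / a ^ 2 + (pq.2 : ℝ) ^ 2 / b ^ 2 > 1 / a ^ 2 + 9 / b ^ 2 := by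
  have hthreshold : 1 / a ^ 2 + 9 / b ^ 2 = (1 : ℝ) ^ 2 / a ^ 2 + (3 : ℝ) ^ 2 / b ^ 2 := by
    norm_num
  refine ⟨?_, ?_, ?_, fun pq hpq => ?_⟩
  · rw [hthreshold, show 4 / a ^ 2 + 1 / b ^ 2 = (2 : ℝ) ^ 2 / a ^ 2 + (1 : ℝ) ^ 2 / b ^ 2 by
      norm_num, div_sq_add_div_sq_inj hratio]
    norm_num
  · ext pq
    rw [Set.mem_ofPred_eq, hthreshold, div_sq_add_div_sq_lt_iff hratio,
      ← eight_mul_sq_add_three_mul_sq_lt_35_iff]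
    norm_num
    norm_cast
  · ext pq
    rw [Set.mem_ofPred_eq, hthreshold, div_sq_add_div_sq_inj hratio,
      ← eight_mul_sq_add_three_mul_sq_eq_35_iff]
    norm_num
    norm_cast
  · rw [gt_iff_lt, hthreshold, div_sq_add_div_sq_lt_iff hratio]
    norm_num
    exact_mod_cast lt_eight_mul_sq_add_three_mul_sq_of_notMem hpq

/-- Let `0 < a ≤ b` with `a²/b² = 3/8`. Then `1/a² + 9/b² = 4/a² + 1/b²`;
exactly the two pairs `(1,1)` and `(1,2)` of positive integers satisfy
`p²/a² + q²/b² < 1/a² + 9/b²`; exactly the two pairs `(1,3)` and `(2,1)` satisfy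
`p²/a² + q²/b² = 1/a² + 9/b²`; and every other pair satisfies
`p²/a² + q²/b² > 1/a² + 9/b²`. (Thus at the critical ratio the third Dirichlet
eigenvalue of the rectangle is double: `λ₃ = λ₄ = π²(1/a² + 9/b²)`.) -/
theorem critical_ratio_double_eigenvalue (a b : ℝ) (ha : 0 < a) (hab : a ≤ b)
    (hratio : a ^ 2 / b ^ 2 = 3 / 8) :
    (1 / a ^ 2 + 9 / b ^ 2 = 4 / a ^ 2 + 1 / b ^ 2)
    ∧ {pq : ℕ+ × ℕ+ |
          (pq.1 : ℝ) ^ 2 / a ^ 2 + (pq.2 : ℝ) ^ 2 / b ^ 2 < 1 / a ^ 2 + 9 / b ^ 2}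
        = {((1 : ℕ+), (1 : ℕ+)), ((1 : ℕ+), (2 : ℕ+))}
    ∧ {pq : ℕ+ × ℕ+ |
          (pq.1 : ℝ) ^ 2 / a ^ 2 + (pq.2 : ℝ) ^ 2 / b ^ 2 = 1 / a ^ 2 + 9 / b ^ 2}
        = {((1 : ℕ+), (3 : ℕ+)), ((2 : ℕ+), (1 : ℕ+))}
    ∧ ∀ pq : ℕ+ × ℕ+,
        pq ∉ ({((1 : ℕ+), (1 : ℕ+)), ((1 : ℕ+), (2 : ℕ+)), ((1 : ℕ+), (3 : ℕ+)),
                ((2 : ℕ+), (1 : ℕ+))} : Set (ℕ+ × ℕ+)) →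
        (pq.1 : ℝ) ^ 2 / a ^ 2 + (pq.2 : ℝ) ^ 2 / b ^ 2 > 1 / a ^ 2 + 9 / b ^ 2 :=
  critical_ratio_double_eigenvalue_general a b hratio
end

section
/- Set ε = √(3/8) and let (α,β) ∈ ℝ² with (α,β) ≠ (0,0). Then the zero set of φ_{α,β} has no critical point inside the rectangle: for every (x,y) in the open rectangle (−πε/2, πε/2) × (−π/2, π/2) with φ_{α,β}(x,y) = 0, the gradient ∇φ_{α,β}(x,y) = (∂_xφ_{α,β}(x,y), ∂_yφ_{α,β}(x,y)) is not equal to (0,0). -/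
/-!
With `u = x/ε`, both `cos u` and `cos y` are positive on the open rectangle. Writing
`sin (2u) = 2 sin u cos u` and `cos (2u) = 2 cos² u - 1`, the combination
`sin u · φ + ε cos u · ∂ₓφ` eliminates `α` and equals `2β cos³ u cos y`, so at a critical zero
`β = 0`. Then `φ = 0` and `∂_yφ = 0` read `α cos u cos 3y = 0 = α cos u sin 3y`, which forces
`α = 0`.
-/

open Real

noncomputable section

def epsc : ℝ := Real.sqrt (3 / 8)

def phiAB (α β x y : ℝ) : ℝ :=
  α * Real.cos (x / epsc) * Real.cos (3 * y) + β * Real.sin (2 * x / epsc) * Real.cos y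

theorem epsc_pos : 0 < epsc := Real.sqrt_pos.mpr (by norm_num)

theorem cos_div_pos_of_mem_Ioo {ε x : ℝ} (hε : 0 < ε)
    (hx : x ∈ Set.Ioo (-(π * ε / 2)) (π * ε / 2)) : 0 < cos (x / ε) := by
  apply cos_pos_of_mem_Ioo
  constructor
  · rw [lt_div_iff₀ hε]; linarith [hx.1]
  · rw [div_lt_iff₀ hε]; linarith [hx.2]

theorem hasDerivAt_phiAB_fst (α β x y : ℝ) :
    HasDerivAt (fun t => phiAB α β t y)
      ((-α * sin (x / epsc) * cos (3 * y) + 2 * β * cos (2 * x / epsc) * cos y) / epsc) x := by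
  have hu : HasDerivAt (fun t => t / epsc) (1 / epsc) x := by
    simpa using (hasDerivAt_id x).div_const epsc
  have h2u : HasDerivAt (fun t => 2 * t / epsc) (2 / epsc) x := by
    simpa using ((hasDerivAt_id x).const_mul 2).div_const epsc
  exact (((hu.cos.const_mul α).mul_const (cos (3 * y))).fun_add
    ((h2u.sin.const_mul β).mul_const (cos y))).congr_deriv (by ring)

theorem hasDerivAt_phiAB_snd (α β x y : ℝ) :
    HasDerivAt (fun t => phiAB α β x t)
      (-3 * α * cos (x / epsc) * sin (3 * y) - β * sin (2 * x / epsc) * sin y) y := by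
  have h3 : HasDerivAt (fun t : ℝ => 3 * t) 3 y := by
    simpa using (hasDerivAt_id y).const_mul 3
  exact ((h3.cos.const_mul (α * cos (x / epsc))).fun_add
    ((hasDerivAt_cos y).const_mul (β * sin (2 * x / epsc)))).congr_deriv (by ring)

theorem eq_zero_of_cos_mul_add_sin_two_mul_eq_zero {a b u p q : ℝ} (hu : 0 < cos u)
    (hq : 0 < q) (h₀ : a * cos u * p + b * sin (2 * u) * q = 0)
    (h₁ : -a * sin u * p + 2 * b * cos (2 * u) * q = 0) : b = 0 := by
  rw [sin_two_mul] at h₀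
  rw [cos_two_mul] at h₁
  have h : b * (2 * cos u ^ 3 * q) = 0 := by
    linear_combination sin u * h₀ + cos u * h₁ - 2 * b * q * cos u * sin_sq_add_cos_sq u
  exact (mul_eq_zero.mp h).resolve_right (by positivity)

theorem eq_zero_of_mul_cos_eq_zero_of_mul_sin_eq_zero {a θ : ℝ} (hc : a * cos θ = 0)
    (hs : a * sin θ = 0) : a = 0 := by
  linear_combination cos θ * hc + sin θ * hs - a * sin_sq_add_cos_sq θ

/-- For `ε = √(3/8)` and `(α,β) ≠ (0,0)`, the zero set of `φ_{α,β}`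
has no critical point inside the rectangle `(−πε/2, πε/2) × (−π/2, π/2)`: at every
zero of `φ_{α,β}` inside the open rectangle, the gradient
`(∂ₓφ_{α,β}, ∂_yφ_{α,β})` does not vanish. -/
theorem no_interior_critical_point (α β : ℝ) (hαβ : (α, β) ≠ (0, 0)) (x y : ℝ)
    (hx : x ∈ Set.Ioo (-(π * epsc / 2)) (π * epsc / 2))
    (hy : y ∈ Set.Ioo (-(π / 2)) (π / 2))
    (hzero : phiAB α β x y = 0) :
    ¬ (deriv (fun t => phiAB α β t y) x = 0 ∧ deriv (fun t => phiAB α β x t) y = 0) := by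
  rintro ⟨hdx, hdy⟩
  rw [(hasDerivAt_phiAB_fst α β x y).deriv, div_eq_zero_iff, or_iff_left epsc_pos.ne',
    mul_div_assoc] at hdx
  rw [(hasDerivAt_phiAB_snd α β x y).deriv] at hdy
  rw [phiAB, mul_div_assoc] at hzero
  have hcu := cos_div_pos_of_mem_Ioo epsc_pos hx
  obtain rfl : β = 0 :=
    eq_zero_of_cos_mul_add_sin_two_mul_eq_zero hcu (cos_pos_of_mem_Ioo hy) hzero hdx
  have hαc : α * cos (x / epsc) = 0 :=
    eq_zero_of_mul_cos_eq_zero_of_mul_sin_eq_zero (θ := 3 * y)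
      (by linear_combination hzero) (by linear_combination -hdy / 3)
  obtain rfl : α = 0 := (mul_eq_zero.mp hαc).resolve_right hcu.ne'
  exact hαβ rfl

end
end

section
/- Let u ∈ L²(ℝ², ℂ) satisfy Σ₁^c u = u almost everywhere. Then U₂₁ preserves the L² norm: ∫ |(1/√2)(u(x,y) + conj(u(x,−y)))|² dx dy = ∫ |u(x,y)|² dx dy. (The key identity is that Re ∫ u · conj(Σ₂^c u) = 0 whenever Σ₁^c u = u.) -/
/-!
Expanding the square, `‖(u + Σ₂^c u)/√2‖² = ½‖u‖² + ½‖Σ₂^c u‖² + Re(u · u∘Σ₂)`. The reflection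
`Σ₂` preserves Lebesgue measure, so the first two terms integrate to `∫ ‖u‖²`. For the cross
term, `Σ₁^c u = u` gives `u(−x, y) = i·conj(u(x, y))`, whence the product `u(x, y) u(x, −y)` turns
into minus its conjugate under `x ↦ −x`: its real part is odd under the measure-preserving
reflection `Σ₁` and therefore integrates to zero.
-/

open MeasureTheory

noncomputable section

/-- The antilinear symmetry `Σ₁^c = iΓΣ₁`: `(Σ₁^c u)(x,y) = i·conj(u(−x,y))`. -/
def Sigma1c (u : ℝ × ℝ → ℂ) : ℝ × ℝ → ℂ :=
  fun p => Complex.I * (starRingEnd ℂ) (u (-p.1, p.2))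

theorem MeasureTheory.MeasurePreserving.integral_eq_zero_of_ae_comp_eq_neg {α E : Type*}
    [MeasurableSpace α] {μ : Measure α} [NormedAddCommGroup E] [NormedSpace ℝ E]
    {σ : α ≃ᵐ α} (hσ : MeasurePreserving σ μ μ) {f : α → E} (hf : ∀ᵐ x ∂μ, f (σ x) = -f x) :
    ∫ x, f x ∂μ = 0 := by
  have h := hσ.integral_comp' f
  rw [integral_congr_ae hf, integral_neg] at h
  have := IsAddTorsionFree.of_isTorsionFree ℝ E
  exact neg_eq_self.mp h

namespace Complex

open scoped ComplexConjugate

theorem normSq_add_conj (a b : ℂ) :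
    normSq (a + conj b) = normSq a + normSq b + 2 * (a * b).re := by
  rw [normSq_add, normSq_conj, conj_conj]

theorem norm_inv_sqrt_two_mul_add_conj_sq (a b : ℂ) :
    ‖((Real.sqrt 2 : ℝ) : ℂ)⁻¹ * (a + conj b)‖ ^ 2
      = 1 / 2 * ‖a‖ ^ 2 + 1 / 2 * ‖b‖ ^ 2 + (a * b).re := by
  have h_sqrt : ‖((Real.sqrt 2 : ℝ) : ℂ)⁻¹‖ ^ 2 = 1 / 2 := by
    rw [norm_inv, norm_real, Real.norm_of_nonneg (Real.sqrt_nonneg 2), inv_pow,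
      Real.sq_sqrt zero_le_two, one_div]
  rw [norm_mul, mul_pow, h_sqrt, Complex.sq_norm, Complex.sq_norm, Complex.sq_norm, normSq_add_conj]
  ring

theorem re_I_mul_conj_mul_I_mul_conj (c d : ℂ) :
    (I * conj c * (I * conj d)).re = -(c * d).re := by
  have h : I * conj c * (I * conj d) = -conj (c * d) := by
    rw [map_mul]
    linear_combination conj c * conj d * I_mul_I
  rw [h, neg_re, conj_re]

end Complex

def reflectFst : (ℝ × ℝ) ≃ᵐ (ℝ × ℝ) :=
  (MeasurableEquiv.neg ℝ).prodCongr (MeasurableEquiv.refl ℝ)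

def reflectSnd : (ℝ × ℝ) ≃ᵐ (ℝ × ℝ) :=
  (MeasurableEquiv.refl ℝ).prodCongr (MeasurableEquiv.neg ℝ)

@[simp] theorem reflectFst_apply (p : ℝ × ℝ) : reflectFst p = (-p.1, p.2) := rfl

@[simp] theorem reflectSnd_apply (p : ℝ × ℝ) : reflectSnd p = (p.1, -p.2) := rfl

theorem measurePreserving_reflectFst : MeasurePreserving reflectFst volume volume := by
  rw [Measure.volume_eq_prod]
  exact (Measure.measurePreserving_neg volume).prod (MeasurePreserving.id volume)

theorem measurePreserving_reflectSnd : MeasurePreserving reflectSnd volume volume := by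
  rw [Measure.volume_eq_prod]
  exact (MeasurePreserving.id volume).prod (Measure.measurePreserving_neg volume)

theorem ae_re_mul_reflectSnd_comp_reflectFst_eq_neg {u : ℝ × ℝ → ℂ} (hsym : ∀ᵐ p, Sigma1c u p = u p) :
    ∀ᵐ p, (u (reflectFst p) * u (reflectSnd (reflectFst p))).re
      = -(u p * u (reflectSnd p)).re := by
  filter_upwards [hsym, measurePreserving_reflectSnd.quasiMeasurePreserving.ae hsym]
    with p hp hp_snd
  simp only [Sigma1c, reflectFst_apply, reflectSnd_apply] at hp hp_snd ⊢
  rw [← hp, ← hp_snd, Complex.re_I_mul_conj_mul_I_mul_conj, neg_neg]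

/-- Let `u ∈ L²(ℝ², ℂ)` satisfy `Σ₁^c u = u` almost everywhere.
Then `U₂₁ = (1/√2)(I + Σ₂^c)` preserves the `L²` norm:
`∫ |(1/√2)(u(x,y) + conj(u(x,−y)))|² dx dy = ∫ |u(x,y)|² dx dy`. -/
theorem U21_norm_preserving (u : ℝ × ℝ → ℂ)
    (hu : MemLp u 2 (volume : Measure (ℝ × ℝ)))
    (hsym : ∀ᵐ p : ℝ × ℝ, Sigma1c u p = u p) :
    (∫ p : ℝ × ℝ,
        ‖((Real.sqrt 2 : ℝ) : ℂ)⁻¹ * (u p + (starRingEnd ℂ) (u (p.1, -p.2)))‖ ^ 2)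
      = ∫ p : ℝ × ℝ, ‖u p‖ ^ 2 := by
  simp only [Complex.norm_inv_sqrt_two_mul_add_conj_sq]
  set w : ℝ × ℝ → ℂ := fun p => u (p.1, -p.2)
  have hw : MemLp w 2 volume := hu.comp_measurePreserving measurePreserving_reflectSnd
  have int_u := (memLp_two_iff_integrable_sq_norm hu.1).mp hu
  have int_w := (memLp_two_iff_integrable_sq_norm hw.1).mp hw
  have int_cross : Integrable (fun p => (u p * w p).re) volume := (hu.integrable_mul hw).re
  have norm_w : ∫ p, ‖w p‖ ^ 2 = ∫ p, ‖u p‖ ^ 2 :=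
    measurePreserving_reflectSnd.integral_comp' fun p => ‖u p‖ ^ 2
  have cross : ∫ p, (u p * w p).re = 0 :=
    measurePreserving_reflectFst.integral_eq_zero_of_ae_comp_eq_neg
      (ae_re_mul_reflectSnd_comp_reflectFst_eq_neg hsym)
  rw [integral_add (f := fun p => 1 / 2 * ‖u p‖ ^ 2 + 1 / 2 * ‖w p‖ ^ 2)
      ((int_u.const_mul _).add (int_w.const_mul _)) int_cross,
    integral_add (int_u.const_mul _) (int_w.const_mul _), integral_const_mul,
    integral_const_mul, norm_w, cross]
  ring

end
end
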